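/- For a (G_Γ, β, γ0)-vertex algebra V (as in the context) the following hold: (i) Y_{−1}(u, Y_{−2}(v, w)) ∈ C₂(V) and Y_{−1}(Y_{−2}(u, v), w) ∈ C₂(V) for all u, v, w ∈ V; (ii) Y_{−1}(Y_{−1}(u, v), w) − Y_{−1}(u, Y_{−1}(v, w)) ∈ C₂(V) for all u, v, w ∈ V; (iii) Y_{−1}(u, v) − β(γ1, γ2)·Y_{−1}(v, u) ∈ C₂(V) for all γ1, γ2 ∈ Γ, u ∈ V_{γ1}, v ∈ V_{γ2}. Consequently Y_{−1} and the class of 𝟙 induce on R(V) = V/C₂(V) the structure of a unital associative β-commutative algebra (the C₂-algebra of V). -/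

import Mathlib

/-! Every product `Y_m` with `m ≤ -2` lies in `C₂(V)`: the derivation identity
`Y_m(D u, v) = -m • Y_{m-1}(u, v)` lowers `m`, and `m` is invertible in characteristic zero.
The `β`-Jacobi identity at `l = 0` (commutator formula) and at `m = 0` (iterate formula)
writes each element in (i)–(iii), for homogeneous `u, v`, as such products plus at most the
term `Y_{-1}(u, Y_{-1}(v, w))`; bilinearity and the grading then give (i) and (ii) for all
`u, v`. By (i), `C₂(V)` is a two-sided ideal for `Y_{-1}`, so `Y_{-1}` descends to
`V / C₂(V)`, where (ii), (iii), vacuum and creation give associativity, `β`-commutativity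
and the unit. -/

/-- The generalized binomial coefficient `binom(a, i) = a(a-1)⋯(a-i+1)/i!`
for `a : ℤ`, `i : ℕ`; it is an integer. -/
def zbinom (a : ℤ) (i : ℕ) : ℤ :=
  if 0 ≤ a then (a.toNat.choose i : ℤ)
  else (-1 : ℤ) ^ i * ((((i : ℤ) - a - 1).toNat).choose i : ℤ)

/-- A `(G_Γ, β, γ0)`-vertex algebra in component form, *without* the
derivation axiom (which is to be derived): a `Γ`-graded `k`-vector space `V`
(internal direct sum of the subspaces `Vg γ`), bilinear products
`Y n : V → V → V` of degree `n • γ0`, and a vacuum vector `vac ∈ V_0`,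
satisfying truncation, vacuum, creation and the `β`-Jacobi identity. -/
structure PreVA (k : Type*) [Field k] (Γ : Type*) [AddCommGroup Γ] [DecidableEq Γ]
    (γ0 : Γ) (β : Γ → Γ → k)
    (V : Type*) [AddCommGroup V] [Module k V] where
  Vg : Γ → Submodule k V
  internal : DirectSum.IsInternal Vg
  Y : ℤ → V →ₗ[k] V →ₗ[k] V
  vac : V
  vac_mem : vac ∈ Vg 0
  grading : ∀ (n : ℤ) (γ1 γ2 : Γ) (u v : V), u ∈ Vg γ1 → v ∈ Vg γ2 →
      Y n u v ∈ Vg (γ1 + γ2 + n • γ0)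
  truncation : ∀ u v : V, ∃ N : ℤ, ∀ n : ℤ, N ≤ n → Y n u v = 0
  vacuum_left : ∀ v : V, Y (-1) vac v = v
  vacuum_left' : ∀ n : ℤ, n ≠ -1 → ∀ v : V, Y n vac v = 0
  creation : ∀ v : V, Y (-1) v vac = v
  creation' : ∀ n : ℤ, 0 ≤ n → ∀ v : V, Y n v vac = 0
  jacobi : ∀ (l m n : ℤ) (γ1 γ2 : Γ) (u v w : V), u ∈ Vg γ1 → v ∈ Vg γ2 →
      (∑ᶠ i : ℕ, (((-1 : k) ^ i * (zbinom l i : k)) •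
          Y (m + l - (i : ℤ)) u (Y (n + (i : ℤ)) v w)))
        - ((-1 : k) ^ l * β γ1 γ2) •
            (∑ᶠ i : ℕ, (((-1 : k) ^ i * (zbinom l i : k)) •
              Y (n + l - (i : ℤ)) v (Y (m + (i : ℤ)) u w)))
        = ∑ᶠ i : ℕ, ((zbinom m i : k) •
            Y (m + n - (i : ℤ)) (Y (l + (i : ℤ)) u v) w)


/-- A `(G_Γ, β, γ0)`-vertex algebra in component form: a `PreVA` together
with the derivation properties of `D(v) = Y_{-2}(v, 𝟙)`, namely
`D(Y_n(u,v)) - Y_n(u, D v) = -n • Y_{n-1}(u,v)` and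
`Y_n(D u, v) = -n • Y_{n-1}(u,v)`. -/
structure VA (k : Type*) [Field k] (Γ : Type*) [AddCommGroup Γ] [DecidableEq Γ]
    (γ0 : Γ) (β : Γ → Γ → k)
    (V : Type*) [AddCommGroup V] [Module k V]
    extends PreVA k Γ γ0 β V where
  deriv1 : ∀ (n : ℤ) (u v : V),
      Y (-2) (Y n u v) vac - Y n u (Y (-2) v vac) = (-n) • Y (n - 1) u v
  deriv2 : ∀ (n : ℤ) (u v : V),
      Y n (Y (-2) u vac) v = (-n) • Y (n - 1) u v

/-- The subspace `C₂(V) = span_k { Y_{-2}(u, v) : u, v ∈ V }`. -/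
def C2 {k Γ V : Type*} [Field k] [AddCommGroup Γ] [DecidableEq Γ]
    [AddCommGroup V] [Module k V] {γ0 : Γ} {β : Γ → Γ → k}
    (A : VA k Γ γ0 β V) : Submodule k V :=
  Submodule.span k {x : V | ∃ u v : V, A.Y (-2) u v = x}

lemma zbinom_zero_right (a : ℤ) : zbinom a 0 = 1 := by
  unfold zbinom; split <;> simp

lemma zbinom_zero_left {i : ℕ} (hi : i ≠ 0) : zbinom 0 i = 0 := by
  simp [zbinom, Nat.choose_eq_zero_of_lt (Nat.pos_of_ne_zero hi)]

namespace Submodule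

variable {R M ι : Type*} [Ring R] [AddCommGroup M] [Module R M] (S : Submodule R M)

lemma finsum_mem {f : ι → M} (h : ∀ i, f i ∈ S) : ∑ᶠ i, f i ∈ S :=
  finsum_induction (· ∈ S) S.zero_mem (fun _ _ => S.add_mem) h

lemma finsum_sub_mem [DecidableEq ι] {f : ι → M} (hf : (Function.support f).Finite) (i₀ : ι)
    (h : ∀ i ≠ i₀, f i ∈ S) : ∑ᶠ i, f i - f i₀ ∈ S := by
  have hsupp : Function.support f ⊆ ↑(insert i₀ hf.toFinset) := by
    simp [Set.subset_insert]
  rw [finsum_eq_sum_of_support_subset f hsupp,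
    ← Finset.add_sum_erase _ _ (Finset.mem_insert_self _ _), add_sub_cancel_left]
  exact S.sum_mem fun i hi => h i (Finset.ne_of_mem_erase hi)

end Submodule

section VertexAlgebra

variable {k Γ V : Type*} [Field k] [AddCommGroup Γ] [DecidableEq Γ] [AddCommGroup V] [Module k V]
  {γ0 : Γ} {β : Γ → Γ → k}

namespace PreVA

variable (A : PreVA k Γ γ0 β V)

lemma map_mem_of_forall_mem_Vg {W : Type*} [AddCommGroup W] [Module k W] (f : V →ₗ[k] W)
    (S : Submodule k W) (h : ∀ γ, ∀ x ∈ A.Vg γ, f x ∈ S) (x : V) : f x ∈ S := by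
  have hle : ⨆ γ, A.Vg γ ≤ S.comap f := iSup_le h
  rw [A.internal.submodule_iSup_eq_top] at hle
  exact hle Submodule.mem_top

lemma map₂_mem_of_forall_mem_Vg {W : Type*} [AddCommGroup W] [Module k W]
    (f : V →ₗ[k] V →ₗ[k] W) (S : Submodule k W)
    (h : ∀ γ1 γ2 u v, u ∈ A.Vg γ1 → v ∈ A.Vg γ2 → f u v ∈ S) (u v : V) : f u v ∈ S :=
  A.map_mem_of_forall_mem_Vg (f.flip v) S
    (fun γ1 x hx => A.map_mem_of_forall_mem_Vg (f x) S (fun γ2 y hy => h γ1 γ2 x y hx hy) v) u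

lemma finite_support_of_Y (F : ℕ → V → V) (hF : ∀ i, F i 0 = 0) (a : ℤ) (u v : V) :
    (Function.support fun i : ℕ => F i (A.Y (a + i) u v)).Finite := by
  obtain ⟨N, hN⟩ := A.truncation u v
  refine (Set.finite_lt_nat (N - a).toNat).subset fun i hi => ?_
  by_contra hle
  simp only [Set.mem_ofPred_eq, not_lt] at hle
  exact hi (show F i (A.Y (a + i) u v) = 0 by rw [hN _ (by omega), hF])

lemma commutator_formula {γ1 γ2 : Γ} {u v : V} (hu : u ∈ A.Vg γ1) (hv : v ∈ A.Vg γ2)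
    (m n : ℤ) (w : V) :
    A.Y m u (A.Y n v w) - β γ1 γ2 • A.Y n v (A.Y m u w)
      = ∑ᶠ i : ℕ, (zbinom m i : k) • A.Y (m + n - i) (A.Y i u v) w := by
  have hj := A.jacobi 0 m n γ1 γ2 u v w hu hv
  rw [finsum_eq_single _ 0 (fun i hi => by simp [zbinom_zero_left hi]),
    finsum_eq_single _ 0 (fun i hi => by simp [zbinom_zero_left hi])] at hj
  simpa [zbinom_zero_right] using hj

lemma iterate_formula {γ1 γ2 : Γ} {u v : V} (hu : u ∈ A.Vg γ1) (hv : v ∈ A.Vg γ2)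
    (l n : ℤ) (w : V) :
    A.Y n (A.Y l u v) w
      = ∑ᶠ i : ℕ, ((-1 : k) ^ i * (zbinom l i : k)) • A.Y (l - i) u (A.Y (n + i) v w)
        - ((-1 : k) ^ l * β γ1 γ2) •
          ∑ᶠ i : ℕ, ((-1 : k) ^ i * (zbinom l i : k)) • A.Y (n + l - i) v (A.Y i u w) := by
  have hj := A.jacobi l 0 n γ1 γ2 u v w hu hv
  rw [finsum_eq_single (fun i : ℕ => (zbinom 0 i : k) • A.Y (0 + n - i) (A.Y (l + i) u v) w) 0
    (fun i hi => by simp [zbinom_zero_left hi])] at hj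
  simpa [zbinom_zero_right] using hj.symm

end PreVA

namespace VA

variable [CharZero k] (A : VA k Γ γ0 β V)

lemma Y_mem_C2 {m : ℤ} (hm : m ≤ -2) (u v : V) : A.Y m u v ∈ C2 A := by
  induction m, hm using Int.leInductionDown generalizing u with
  | base => exact Submodule.subset_span ⟨u, v, rfl⟩
  | pred m hm ih =>
    have hm0 : ((-m : ℤ) : k) ≠ 0 := by exact_mod_cast (show -m ≠ 0 by omega)
    have h := ih (A.Y (-2) u A.vac)
    rw [A.deriv2, ← Int.cast_smul_eq_zsmul k] at h
    exact (Submodule.smul_mem_iff _ hm0).mp h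

lemma finsum_smul_Y_mem_C2 (c : ℕ → k) (a : ℕ → ℤ) (x y : ℕ → V) (ha : ∀ i, a i ≤ -2) :
    ∑ᶠ i, c i • A.Y (a i) (x i) (y i) ∈ C2 A :=
  (C2 A).finsum_mem fun i => (C2 A).smul_mem _ (A.Y_mem_C2 (ha i) _ _)

lemma Y_neg_one_apply_Y_neg_two_mem_C2_of_mem_Vg {γ1 γ2 : Γ} {u v : V} (hu : u ∈ A.Vg γ1)
    (hv : v ∈ A.Vg γ2) (w : V) : A.Y (-1) u (A.Y (-2) v w) ∈ C2 A := by
  rw [← sub_add_cancel (A.Y (-1) u (A.Y (-2) v w)) (β γ1 γ2 • A.Y (-2) v (A.Y (-1) u w)),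
    A.commutator_formula hu hv]
  exact add_mem (A.finsum_smul_Y_mem_C2 _ _ _ _ fun i => by omega)
    ((C2 A).smul_mem _ (A.Y_mem_C2 le_rfl _ _))

lemma Y_neg_one_Y_neg_two_apply_mem_C2_of_mem_Vg {γ1 γ2 : Γ} {u v : V} (hu : u ∈ A.Vg γ1)
    (hv : v ∈ A.Vg γ2) (w : V) : A.Y (-1) (A.Y (-2) u v) w ∈ C2 A := by
  rw [A.iterate_formula hu hv]
  exact sub_mem (A.finsum_smul_Y_mem_C2 _ _ _ _ fun i => by omega)
    ((C2 A).smul_mem _ (A.finsum_smul_Y_mem_C2 _ _ _ _ fun i => by omega))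

lemma Y_neg_one_assoc_mem_C2_of_mem_Vg {γ1 γ2 : Γ} {u v : V} (hu : u ∈ A.Vg γ1)
    (hv : v ∈ A.Vg γ2) (w : V) :
    A.Y (-1) (A.Y (-1) u v) w - A.Y (-1) u (A.Y (-1) v w) ∈ C2 A := by
  -- `Y_{-1}(u, Y_{-1}(v, w))` is the `i = 0` term of the first sum of the iterate formula.
  have h0 : A.Y (-1) u (A.Y (-1) v w) = ((-1 : k) ^ (0 : ℕ) * (zbinom (-1) 0 : k)) •
      A.Y (-1 - (0 : ℕ)) u (A.Y (-1 + (0 : ℕ)) v w) := by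
    simp [zbinom_zero_right]
  rw [A.iterate_formula hu hv, sub_right_comm, h0]
  refine sub_mem ((C2 A).finsum_sub_mem ?_ 0 fun i hi => ?_)
    ((C2 A).smul_mem _ (A.finsum_smul_Y_mem_C2 _ _ _ _ fun i => by omega))
  · exact A.finite_support_of_Y
      (fun i x => ((-1 : k) ^ i * (zbinom (-1) i : k)) • A.Y (-1 - i) u x) (fun i => by simp)
      (-1) v w
  · exact (C2 A).smul_mem _ (A.Y_mem_C2 (by omega) _ _)

lemma Y_neg_one_sub_smul_swap_mem_C2 {γ1 γ2 : Γ} {u v : V} (hu : u ∈ A.Vg γ1)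
    (hv : v ∈ A.Vg γ2) : A.Y (-1) u v - β γ1 γ2 • A.Y (-1) v u ∈ C2 A := by
  have h := A.commutator_formula hu hv (-1) (-1) A.vac
  rw [A.creation, A.creation] at h
  rw [h]
  exact A.finsum_smul_Y_mem_C2 _ _ _ _ fun i => by omega

lemma Y_neg_one_apply_Y_neg_two_mem_C2 (u v w : V) : A.Y (-1) u (A.Y (-2) v w) ∈ C2 A :=
  A.map₂_mem_of_forall_mem_Vg ((A.Y (-1)).compl₂ ((A.Y (-2)).flip w)) (C2 A)
    (fun _ _ _ _ hu hv => A.Y_neg_one_apply_Y_neg_two_mem_C2_of_mem_Vg hu hv w) u v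

lemma Y_neg_one_Y_neg_two_apply_mem_C2 (u v w : V) : A.Y (-1) (A.Y (-2) u v) w ∈ C2 A :=
  A.map₂_mem_of_forall_mem_Vg ((A.Y (-2)).compr₂ ((A.Y (-1)).flip w)) (C2 A)
    (fun _ _ _ _ hu hv => A.Y_neg_one_Y_neg_two_apply_mem_C2_of_mem_Vg hu hv w) u v

lemma Y_neg_one_assoc_mem_C2 (u v w : V) :
    A.Y (-1) (A.Y (-1) u v) w - A.Y (-1) u (A.Y (-1) v w) ∈ C2 A :=
  A.map₂_mem_of_forall_mem_Vg
    ((A.Y (-1)).compr₂ ((A.Y (-1)).flip w) - (A.Y (-1)).compl₂ ((A.Y (-1)).flip w)) (C2 A)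
    (fun _ _ _ _ hu hv => A.Y_neg_one_assoc_mem_C2_of_mem_Vg hu hv w) u v

lemma Y_neg_one_mem_C2_of_mem_left {c : V} (hc : c ∈ C2 A) (v : V) : A.Y (-1) c v ∈ C2 A :=
  (Submodule.span_le (p := (C2 A).comap ((A.Y (-1)).flip v)) |>.2
    (by rintro _ ⟨a, b, rfl⟩; exact A.Y_neg_one_Y_neg_two_apply_mem_C2 a b v)) hc

lemma Y_neg_one_mem_C2_of_mem_right (u : V) {c : V} (hc : c ∈ C2 A) : A.Y (-1) u c ∈ C2 A :=
  (Submodule.span_le (p := (C2 A).comap (A.Y (-1) u)) |>.2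
    (by rintro _ ⟨a, b, rfl⟩; exact A.Y_neg_one_apply_Y_neg_two_mem_C2 u a b)) hc

def c2Mul : V ⧸ C2 A →ₗ[k] V ⧸ C2 A →ₗ[k] V ⧸ C2 A :=
  ((A.Y (-1)).compr₂ (C2 A).mkQ).liftQ₂ (C2 A) (C2 A)
    (fun _ hc => LinearMap.ext fun v =>
      (Submodule.Quotient.mk_eq_zero _).2 (A.Y_neg_one_mem_C2_of_mem_left hc v))
    (fun _ hc => LinearMap.ext fun u =>
      (Submodule.Quotient.mk_eq_zero _).2 (A.Y_neg_one_mem_C2_of_mem_right u hc))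

lemma c2Mul_mk (u v : V) :
    A.c2Mul (Submodule.Quotient.mk u) (Submodule.Quotient.mk v)
      = Submodule.Quotient.mk (A.Y (-1) u v) :=
  rfl

lemma c2Mul_assoc (a b c : V ⧸ C2 A) : A.c2Mul (A.c2Mul a b) c = A.c2Mul a (A.c2Mul b c) := by
  induction a using Submodule.Quotient.induction_on
  induction b using Submodule.Quotient.induction_on
  induction c using Submodule.Quotient.induction_on
  simp only [c2Mul_mk, Submodule.Quotient.eq]
  exact A.Y_neg_one_assoc_mem_C2 _ _ _

lemma c2Mul_vac_left (a : V ⧸ C2 A) : A.c2Mul (Submodule.Quotient.mk A.vac) a = a := by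
  induction a using Submodule.Quotient.induction_on
  rw [c2Mul_mk, A.vacuum_left]

lemma c2Mul_vac_right (a : V ⧸ C2 A) : A.c2Mul a (Submodule.Quotient.mk A.vac) = a := by
  induction a using Submodule.Quotient.induction_on
  rw [c2Mul_mk, A.creation]

lemma c2Mul_mk_comm_of_mem_Vg {γ1 γ2 : Γ} {u v : V} (hu : u ∈ A.Vg γ1) (hv : v ∈ A.Vg γ2) :
    A.c2Mul (Submodule.Quotient.mk u) (Submodule.Quotient.mk v)
      = β γ1 γ2 • A.c2Mul (Submodule.Quotient.mk v) (Submodule.Quotient.mk u) := by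
  rw [c2Mul_mk, c2Mul_mk, ← Submodule.Quotient.mk_smul, Submodule.Quotient.eq]
  exact A.Y_neg_one_sub_smul_swap_mem_C2 hu hv

end VA

end VertexAlgebra

theorem statement11 {k Γ V : Type*} [Field k] [CharZero k] [AddCommGroup Γ]
    [DecidableEq Γ] [AddCommGroup V] [Module k V]
    (γ0 : Γ) (β : Γ → Γ → k) (A : VA k Γ γ0 β V) :
    (∀ u v w : V,
      A.Y (-1) u (A.Y (-2) v w) ∈ C2 A ∧ A.Y (-1) (A.Y (-2) u v) w ∈ C2 A) ∧
    (∀ u v w : V,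
      A.Y (-1) (A.Y (-1) u v) w - A.Y (-1) u (A.Y (-1) v w) ∈ C2 A) ∧
    (∀ (γ1 γ2 : Γ) (u v : V), u ∈ A.Vg γ1 → v ∈ A.Vg γ2 →
      A.Y (-1) u v - β γ1 γ2 • A.Y (-1) v u ∈ C2 A) ∧
    (∃ π : (V ⧸ C2 A) → (V ⧸ C2 A) → (V ⧸ C2 A),
      (∀ u v : V, π (Submodule.Quotient.mk u) (Submodule.Quotient.mk v)
          = Submodule.Quotient.mk (A.Y (-1) u v)) ∧
      (∀ a b c : V ⧸ C2 A, π (π a b) c = π a (π b c)) ∧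
      (∀ a : V ⧸ C2 A, π (Submodule.Quotient.mk A.vac) a = a ∧
          π a (Submodule.Quotient.mk A.vac) = a) ∧
      (∀ (γ1 γ2 : Γ) (u v : V), u ∈ A.Vg γ1 → v ∈ A.Vg γ2 →
        π (Submodule.Quotient.mk u) (Submodule.Quotient.mk v)
          = β γ1 γ2 • π (Submodule.Quotient.mk v) (Submodule.Quotient.mk u))) :=
  ⟨fun u v w =>
      ⟨A.Y_neg_one_apply_Y_neg_two_mem_C2 u v w, A.Y_neg_one_Y_neg_two_apply_mem_C2 u v w⟩,
    A.Y_neg_one_assoc_mem_C2, fun _ _ _ _ => A.Y_neg_one_sub_smul_swap_mem_C2,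
    fun a b => A.c2Mul a b, A.c2Mul_mk, A.c2Mul_assoc,
    fun a => ⟨A.c2Mul_vac_left a, A.c2Mul_vac_right a⟩,
    fun _ _ _ _ => A.c2Mul_mk_comm_of_mem_Vg⟩
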